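/- A positive harmonic function v on an open sector A = {re^{iθ} : r > 0, |θ| < α} of opening 2α ≤ 2π grows at most polynomially in any proper subsector: for β < α there exist C, p > 0 such that v(re^{iθ}) ≤ C·r^p for all r ≥ 1 and |θ| ≤ β. -/

import Mathlib

/-!
By the Poisson formula, a positive harmonic function `u` satisfies `u w ≤ 3 u c` whenever `w` lies
within half the radius of a disc around `c` contained in its domain. Chaining such discs through a
connected domain `U` and covering a compact `K ⊆ U` by them gives a single constant `C` with
`u ≤ C u(z₀)` on `K` for every positive harmonic `u` on `U`. As the image of the strip
`|Im w| < α` under `exp`, the sector is open and connected for every `α`, and it is invariant under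
dilations, which preserve positive harmonic functions; applying the compact bound to `u (2ⁿ ·)` on
`K = {r e^{iθ} : 1 ≤ r ≤ 2, |θ| ≤ β}` gives `v ≤ C^(n+1) v(1)` on `2ⁿ K`, which is polynomial
growth of degree `p` as soon as `C ≤ 2^p`.
-/

open Real Complex

/-- The Laplacian of `v : ℂ → ℝ` as the sum of the two second partial derivatives. -/
noncomputable def lap (v : ℂ → ℝ) (z : ℂ) : ℝ :=
  deriv (deriv (fun x : ℝ => v (x + z.im * Complex.I))) z.re +
    deriv (deriv (fun y : ℝ => v (z.re + y * Complex.I))) z.im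

/-- `v` is harmonic on an open set `U`. -/
def HarmonicOn (v : ℂ → ℝ) (U : Set ℂ) : Prop :=
  ContDiffOn ℝ 2 v U ∧ ∀ z ∈ U, lap v z = 0

open Metric Set Filter Topology InnerProductSpace Laplacian

section
variable {E F : Type*} [NormedAddCommGroup E] [NormedSpace ℝ E] [NormedAddCommGroup F]
  [NormedSpace ℝ F]

theorem ContDiffAt.deriv_deriv_comp_eq_fderiv_fderiv {f : E → F} {L : ℝ → E} {w : E} {t₀ : ℝ}
    (hf : ContDiffAt ℝ 2 f (L t₀)) (hL : ∀ t, HasDerivAt L w t) :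
    deriv (deriv fun t => f (L t)) t₀ = fderiv ℝ (fderiv ℝ f) (L t₀) w w := by
  have hLcont : Continuous L := continuous_iff_continuousAt.2 fun t => (hL t).continuousAt
  have hderiv : deriv (fun t => f (L t)) =ᶠ[𝓝 t₀] fun t => fderiv ℝ f (L t) w := by
    filter_upwards [hLcont.continuousAt.eventually (hf.eventually (by simp))] with t ht
    exact ((ht.differentiableAt two_ne_zero).hasFDerivAt.comp_hasDerivAt t (hL t)).deriv
  have hf' : HasFDerivAt (fderiv ℝ f) (fderiv ℝ (fderiv ℝ f) (L t₀)) (L t₀) :=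
    ((hf.fderiv_right (m := 1) le_rfl).differentiableAt one_ne_zero).hasFDerivAt
  rw [hderiv.deriv_eq]
  simpa using ((hf'.comp_hasDerivAt t₀ (hL t₀)).clm_apply (hasDerivAt_const t₀ w)).deriv
end

theorem lap_eq_laplacian {v : ℂ → ℝ} {z : ℂ} (hv : ContDiffAt ℝ 2 v z) : lap v z = Δ v z := by
  have hre : ∀ t : ℝ, HasDerivAt (fun x : ℝ => (x : ℂ) + z.im * I) 1 t := fun t =>
    (ofRealCLM.hasDerivAt (x := t)).add_const _
  have him : ∀ t : ℝ, HasDerivAt (fun y : ℝ => (z.re : ℂ) + y * I) I t := fun t => by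
    simpa using ((ofRealCLM.hasDerivAt (x := t)).mul_const I).const_add (z.re : ℂ)
  have hz : ContDiffAt ℝ 2 v ((z.re : ℂ) + z.im * I) := by rwa [re_add_im]
  simp only [lap, laplacian_eq_iteratedFDeriv_complexPlane, iteratedFDeriv_two_apply]
  congr 1
  · simpa [re_add_im] using
      hz.deriv_deriv_comp_eq_fderiv_fderiv (L := fun x : ℝ => (x : ℂ) + z.im * I) hre
  · simpa [re_add_im] using
      hz.deriv_deriv_comp_eq_fderiv_fderiv (L := fun y : ℝ => (z.re : ℂ) + y * I) him

theorem HarmonicOn.harmonicOnNhd {v : ℂ → ℝ} {U : Set ℂ} (hU : IsOpen U) (hv : HarmonicOn v U) :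
    HarmonicOnNhd v U := fun z hz =>
  ⟨hv.1.contDiffAt (hU.mem_nhds hz), by
    filter_upwards [hU.mem_nhds hz] with y hy
    rw [← lap_eq_laplacian (hv.1.contDiffAt (hU.mem_nhds hy))]
    exact hv.2 y hy⟩

section
variable {E F : Type*} [NormedAddCommGroup E] [InnerProductSpace ℝ E] [FiniteDimensional ℝ E]
  [NormedAddCommGroup F] [NormedSpace ℝ F] {f : E → F}

theorem laplacian_comp_smul (f : E → F) {l : ℝ} (hl : l ≠ 0) (x : E) :
    Δ (fun y => f (l • y)) x = l ^ 2 • Δ f (l • x) := by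
  let g : E ≃L[ℝ] E := ContinuousLinearEquiv.smulLeft (Units.mk0 l hl)
  have hg : (fun y => f (l • y)) = f ∘ g := rfl
  have := g.iteratedFDerivWithin_comp_right f uniqueDiffOn_univ (x := x) (mem_univ _) 2
  simp only [preimage_univ, iteratedFDerivWithin_univ] at this
  simp only [laplacian_eq_iteratedFDeriv_stdOrthonormalBasis, hg, this, Finset.smul_sum]
  refine Finset.sum_congr rfl fun i _ => ?_
  have := (iteratedFDeriv ℝ 2 f (l • x)).map_smul_univ (fun _ => l)
    ![stdOrthonormalBasis ℝ E i, stdOrthonormalBasis ℝ E i]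
  simpa [g] using this

theorem InnerProductSpace.HarmonicAt.comp_smul {l : ℝ} {x : E} (hf : HarmonicAt f (l • x)) :
    HarmonicAt (fun y => f (l • y)) x := by
  rcases eq_or_ne l 0 with rfl | hl
  · simp
  refine ⟨hf.1.comp x (contDiffAt_id.const_smul l), ?_⟩
  have hcont : ContinuousAt (fun y : E => l • y) x := continuousAt_id.const_smul l
  filter_upwards [hcont.eventually hf.2] with y hy
  rw [laplacian_comp_smul f hl, hy, Pi.zero_apply, smul_zero]
  rfl
end

namespace InnerProductSpace.HarmonicOnNhd
variable {f : ℂ → ℝ} {c w : ℂ} {R : ℝ}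

theorem le_mul_of_mem_ball (hf : HarmonicOnNhd f (closedBall c R))
    (hpos : ∀ z ∈ sphere c R, 0 ≤ f z) (hw : w ∈ ball c R) :
    f w ≤ (R + ‖w - c‖) / (R - ‖w - c‖) * f c := by
  have hR : |R| = R := abs_of_pos (pos_of_mem_ball hw)
  have hf' : HarmonicOnNhd f (closedBall c |R|) := by rwa [hR]
  have hcont : ContinuousOn f (sphere c |R|) := hf'.continuousOn.mono sphere_subset_closedBall
  have hker : ContinuousOn (poissonKernel c w) (sphere c |R|) := by
    rw [poissonKernel_eq_re_herglotzRieszKernel]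
    exact continuous_re.comp_continuousOn (continuousOn_herglotzRieszKernel_sphere hw)
  rw [← hf.circleAverage_poissonKernel_smul hw, ← hf'.circleAverage_eq, ← smul_eq_mul,
    ← circleAverage_smul]
  refine circleAverage_mono (hker.smul hcont).circleIntegrable'
    (hcont.const_smul _).circleIntegrable' fun z hz => ?_
  rw [hR] at hz
  have hk : poissonKernel c w z ≤ (R + ‖w - c‖) / (R - ‖w - c‖) := by
    rw [poissonKernel_eq_re_herglotzRieszKernel]
    exact re_herglotzRieszKernel_le hz hw
  exact mul_le_mul_of_nonneg_right hk (hpos z hz)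

theorem le_three_mul_of_dist_le_half (hf : HarmonicOnNhd f (closedBall c R))
    (hpos : ∀ z ∈ sphere c R, 0 ≤ f z) (hR : 0 < R) (hw : dist w c ≤ R / 2) :
    f w ≤ 3 * f c := by
  have hwc : ‖w - c‖ ≤ R / 2 := by rwa [← dist_eq_norm]
  have hc : 0 ≤ f c := by
    rw [← abs_of_pos hR] at hf hpos
    rw [← hf.circleAverage_eq]
    exact circleAverage_nonneg_of_nonneg hpos
  refine (hf.le_mul_of_mem_ball hpos (mem_ball.2 (by linarith))).trans ?_
  gcongr
  rw [div_le_iff₀ (by linarith)]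
  linarith

end InnerProductSpace.HarmonicOnNhd

section PositiveHarmonic
variable {E : Type*} [NormedAddCommGroup E] [InnerProductSpace ℝ E] [FiniteDimensional ℝ E]

def posHarmonicOn (U : Set E) : Set (E → ℝ) :=
  {u | HarmonicOnNhd u U ∧ ∀ z ∈ U, 0 < u z}

theorem comp_smul_mem_posHarmonicOn {U : Set E} {u : E → ℝ} (hu : u ∈ posHarmonicOn U) {l : ℝ}
    (hU : ∀ z ∈ U, l • z ∈ U) : (fun z => u (l • z)) ∈ posHarmonicOn U :=
  ⟨fun z hz => (hu.1 _ (hU z hz)).comp_smul, fun z hz => hu.2 _ (hU z hz)⟩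

end PositiveHarmonic

section Harnack
variable {U K : Set ℂ} {u : ℂ → ℝ}

theorem le_three_mul_of_mem_posHarmonicOn (hu : u ∈ posHarmonicOn U) {c w : ℂ} {R : ℝ}
    (hR : 0 < R) (hsub : closedBall c R ⊆ U) (hw : dist w c ≤ R / 2) : u w ≤ 3 * u c :=
  (hu.1.mono hsub).le_three_mul_of_dist_le_half
    (fun z hz => (hu.2 z (hsub (sphere_subset_closedBall hz))).le) hR hw

theorem eventually_le_three_mul (hU : IsOpen U) {x : ℂ} (hx : x ∈ U) :
    ∀ᶠ y in 𝓝 x, ∀ u ∈ posHarmonicOn U, u y ≤ 3 * u x ∧ u x ≤ 3 * u y := by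
  obtain ⟨ε, hε, hball⟩ := Metric.isOpen_iff.1 hU x hx
  filter_upwards [ball_mem_nhds x (by positivity : 0 < ε / 4)] with y hy u hu
  rw [mem_ball] at hy
  constructor
  · refine le_three_mul_of_mem_posHarmonicOn hu (R := ε / 2) (by positivity)
      ((closedBall_subset_ball (by linarith)).trans hball) (by linarith)
  · refine le_three_mul_of_mem_posHarmonicOn hu (R := ε / 2) (by positivity)
      ((closedBall_subset_ball' (by linarith)).trans hball) (by rw [dist_comm]; linarith)

theorem exists_le_mul_of_isPreconnected (hU : IsOpen U) (hconn : IsPreconnected U) {x y : ℂ}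
    (hx : x ∈ U) (hy : y ∈ U) : ∃ C > 0, ∀ u ∈ posHarmonicOn U, u y ≤ C * u x := by
  refine hconn.induction₂' (fun x y => ∃ C > 0, ∀ u ∈ posHarmonicOn U, u y ≤ C * u x)
    (fun x hx => ?_) (fun x y z _ hy _ ⟨C₁, hC₁, h₁⟩ ⟨C₂, hC₂, h₂⟩ => ?_) hx hy
  · filter_upwards [nhdsWithin_le_nhds (eventually_le_three_mul hU hx)] with y hy
    exact ⟨⟨3, by norm_num, fun u hu => (hy u hu).1⟩, ⟨3, by norm_num, fun u hu => (hy u hu).2⟩⟩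
  · refine ⟨C₂ * C₁, by positivity, fun u hu => ?_⟩
    calc u z ≤ C₂ * u y := h₂ u hu
      _ ≤ C₂ * (C₁ * u x) := by gcongr; exact h₁ u hu
      _ = C₂ * C₁ * u x := by ring

theorem exists_le_mul_of_isCompact (hU : IsOpen U) (hconn : IsPreconnected U) {z₀ : ℂ}
    (hz₀ : z₀ ∈ U) (hK : IsCompact K) (hKU : K ⊆ U) :
    ∃ C > 0, ∀ u ∈ posHarmonicOn U, ∀ z ∈ K, u z ≤ C * u z₀ := by
  refine hK.induction_on ⟨1, one_pos, by simp⟩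
    (fun s t hst ⟨C, hC, h⟩ => ⟨C, hC, fun u hu z hz => h u hu z (hst hz)⟩)
    (fun s t ⟨C₁, hC₁, h₁⟩ ⟨C₂, hC₂, h₂⟩ => ⟨max C₁ C₂, by positivity, fun u hu z hz => ?_⟩)
    (fun x hx => ?_)
  · have hu₀ := (hu.2 z₀ hz₀).le
    rcases hz with hz | hz
    · exact (h₁ u hu z hz).trans (by gcongr; exact le_max_left _ _)
    · exact (h₂ u hu z hz).trans (by gcongr; exact le_max_right _ _)
  · obtain ⟨C, hC, hx₀⟩ := exists_le_mul_of_isPreconnected hU hconn hz₀ (hKU hx)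
    refine ⟨_, mem_nhdsWithin_of_mem_nhds (eventually_le_three_mul hU (hKU hx)),
      3 * C, by positivity, fun u hu y hy => ?_⟩
    calc u y ≤ 3 * u x := (hy u hu).1
      _ ≤ 3 * (C * u z₀) := by gcongr; exact hx₀ u hu
      _ = 3 * C * u z₀ := by ring

theorem exists_two_pow_smul_le_pow_mul (hU : IsOpen U) (hconn : IsPreconnected U)
    (hcone : ∀ l : ℝ, 0 < l → ∀ z ∈ U, l • z ∈ U) (hK : IsCompact K) (hKU : K ⊆ U) {z₀ : ℂ}
    (hz₀ : (2 : ℝ) • z₀ ∈ K) :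
    ∃ C > 0, ∀ u ∈ posHarmonicOn U, ∀ n : ℕ, ∀ z ∈ K, u ((2 : ℝ) ^ n • z) ≤ C ^ (n + 1) * u z₀ := by
  have hz₀U : z₀ ∈ U := by
    simpa [smul_smul] using hcone 2⁻¹ (by norm_num) _ (hKU hz₀)
  obtain ⟨C, hC, hCK⟩ := exists_le_mul_of_isCompact hU hconn hz₀U hK hKU
  refine ⟨C, hC, fun u hu n => ?_⟩
  induction n with
  | zero => simpa using hCK u hu
  | succ n ih =>
    intro z hz
    have hscaled := comp_smul_mem_posHarmonicOn hu (hcone ((2 : ℝ) ^ (n + 1)) (by positivity))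
    calc u ((2 : ℝ) ^ (n + 1) • z) ≤ C * u ((2 : ℝ) ^ (n + 1) • z₀) := hCK _ hscaled z hz
      _ = C * u ((2 : ℝ) ^ n • (2 : ℝ) • z₀) := by rw [pow_succ, mul_smul]
      _ ≤ C * (C ^ (n + 1) * u z₀) := by gcongr; exact ih _ hz₀
      _ = C ^ (n + 1 + 1) * u z₀ := by ring

end Harnack

section Sector

theorem setOf_ofReal_mul_exp_eq_exp_image (α : ℝ) :
    {z : ℂ | ∃ r θ : ℝ, r > 0 ∧ |θ| < α ∧ z = r * cexp (θ * I)} =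
      cexp '' {w : ℂ | |w.im| < α} := by
  ext z
  constructor
  · rintro ⟨r, θ, hr, hθ, rfl⟩
    exact ⟨Real.log r + θ * I, by simpa using hθ, by
      rw [Complex.exp_add, ← ofReal_exp, Real.exp_log hr]⟩
  · rintro ⟨w, hw, rfl⟩
    exact ⟨Real.exp w.re, w.im, Real.exp_pos _, hw, by
      rw [ofReal_exp, ← Complex.exp_add, re_add_im]⟩

variable (α : ℝ)

theorem isOpen_exp_image_strip : IsOpen (cexp '' {w : ℂ | |w.im| < α}) :=
  isOpenMap_exp _ (isOpen_lt (continuous_abs.comp continuous_im) continuous_const)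

theorem isPreconnected_exp_image_strip : IsPreconnected (cexp '' {w : ℂ | |w.im| < α}) := by
  have hstrip : {w : ℂ | |w.im| < α} = imLm ⁻¹' ball 0 α := by
    ext w
    simp
  have hconv : Convex ℝ {w : ℂ | |w.im| < α} :=
    hstrip ▸ (convex_ball (0 : ℝ) α).linear_preimage imLm
  exact hconv.isPreconnected.image _ Complex.continuous_exp.continuousOn

theorem smul_mem_exp_image_strip {l : ℝ} (hl : 0 < l) {z : ℂ}
    (hz : z ∈ cexp '' {w : ℂ | |w.im| < α}) : l • z ∈ cexp '' {w : ℂ | |w.im| < α} := by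
  obtain ⟨w, hw, rfl⟩ := hz
  exact ⟨Real.log l + w, by simpa using hw, by
    rw [Complex.exp_add, ← ofReal_exp, Real.exp_log hl, real_smul]⟩

def annularSector (β : ℝ) : Set ℂ :=
  (fun q : ℝ × ℝ => (q.1 : ℂ) * cexp (q.2 * I)) '' Icc 1 2 ×ˢ Icc (-β) β

theorem isCompact_annularSector (β : ℝ) : IsCompact (annularSector β) :=
  (isCompact_Icc.prod isCompact_Icc).image (by fun_prop)

theorem ofReal_mul_exp_mem_annularSector {r θ β : ℝ} (hr : r ∈ Icc 1 2) (hθ : |θ| ≤ β) :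
    (r : ℂ) * cexp (θ * I) ∈ annularSector β :=
  ⟨(r, θ), ⟨hr, abs_le.1 hθ⟩, rfl⟩

theorem two_smul_one_mem_annularSector {β : ℝ} (hβ : 0 ≤ β) :
    (2 : ℝ) • (1 : ℂ) ∈ annularSector β := by
  simpa [real_smul] using ofReal_mul_exp_mem_annularSector (r := 2) (θ := 0)
    ⟨one_le_two, le_rfl⟩ (by simpa using hβ)

theorem annularSector_subset_exp_image_strip {α β : ℝ} (hβα : β < α) :
    annularSector β ⊆ cexp '' {w : ℂ | |w.im| < α} := by
  rintro _ ⟨⟨r, θ⟩, ⟨hr, hθ⟩, rfl⟩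
  rw [← setOf_ofReal_mul_exp_eq_exp_image]
  exact ⟨r, θ, by linarith [hr.1], (abs_le.2 hθ).trans_lt hβα, rfl⟩

theorem exists_eq_two_pow_smul_mem_annularSector {r θ β : ℝ} (hr : 1 ≤ r) (hθ : |θ| ≤ β) :
    ∃ n : ℕ, ∃ z ∈ annularSector β, (2 : ℝ) ^ n ≤ r ∧ (r : ℂ) * cexp (θ * I) = (2 : ℝ) ^ n • z := by
  obtain ⟨n, hn, hn'⟩ := exists_nat_pow_near hr one_lt_two
  refine ⟨n, _, ofReal_mul_exp_mem_annularSector (r := r / 2 ^ n) ⟨?_, ?_⟩ hθ, hn, ?_⟩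
  · exact (one_le_div (by positivity)).2 hn
  · rw [div_le_iff₀ (by positivity), ← pow_succ']
    exact hn'.le
  · rw [real_smul]
    push_cast
    field_simp

end Sector

theorem positive_harmonic_polynomial_growth_in_subsector_general
    (α β : ℝ) (hβ₀ : 0 < β) (hβα : β < α)
    (A : Set ℂ)
    (hA : A = {z : ℂ | ∃ r θ : ℝ, r > 0 ∧ |θ| < α ∧ z = (r : ℂ) * Complex.exp (θ * Complex.I)})
    (v : ℂ → ℝ) (hharm : HarmonicOn v A) (hpos : ∀ z ∈ A, 0 < v z) :
    ∃ C > 0, ∃ p > 0, ∀ r θ : ℝ, 1 ≤ r → |θ| ≤ β →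
      v ((r : ℂ) * Complex.exp (θ * Complex.I)) ≤ C * r ^ p := by
  rw [setOf_ofReal_mul_exp_eq_exp_image] at hA
  subst hA
  obtain ⟨c, hc, hbound⟩ := exists_two_pow_smul_le_pow_mul (isOpen_exp_image_strip α)
    (isPreconnected_exp_image_strip α) (fun l hl z hz => smul_mem_exp_image_strip α hl hz)
    (isCompact_annularSector β) (annularSector_subset_exp_image_strip hβα)
    (two_smul_one_mem_annularSector hβ₀.le)
  have hv : v ∈ posHarmonicOn _ := ⟨hharm.harmonicOnNhd (isOpen_exp_image_strip α), hpos⟩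
  have hv1 : 0 < v 1 := hpos 1 ⟨0, by simpa using hβ₀.trans hβα, Complex.exp_zero⟩
  obtain ⟨p, hp⟩ := pow_unbounded_of_one_lt c one_lt_two
  refine ⟨c * v 1, by positivity, p + 1, p.succ_pos, fun r θ hr hθ => ?_⟩
  obtain ⟨n, z, hz, hn, hrz⟩ := exists_eq_two_pow_smul_mem_annularSector hr hθ
  calc v (r * cexp (θ * I)) ≤ c ^ (n + 1) * v 1 := hrz ▸ hbound v hv n z hz
    _ = c * v 1 * c ^ n := by ring
    _ ≤ c * v 1 * ((2 : ℝ) ^ n) ^ (p + 1) := by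
        rw [← pow_mul, mul_comm n, pow_mul]
        gcongr
        exact hp.le.trans (pow_le_pow_right₀ one_le_two p.le_succ)
    _ ≤ c * v 1 * r ^ (p + 1) := by gcongr

theorem positive_harmonic_polynomial_growth_in_subsector
    (α β : ℝ) (hα₀ : 0 < α) (hαπ : α ≤ π) (hβ₀ : 0 < β) (hβα : β < α)
    (A : Set ℂ)
    (hA : A = {z : ℂ | ∃ r θ : ℝ, r > 0 ∧ |θ| < α ∧ z = (r : ℂ) * Complex.exp (θ * Complex.I)})
    (v : ℂ → ℝ) (hharm : HarmonicOn v A) (hpos : ∀ z ∈ A, 0 < v z) :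
    ∃ C > 0, ∃ p > 0, ∀ r θ : ℝ, 1 ≤ r → |θ| ≤ β →
      v ((r : ℂ) * Complex.exp (θ * Complex.I)) ≤ C * r ^ p :=
  positive_harmonic_polynomial_growth_in_subsector_general α β hβ₀ hβα A hA v hharm hpos
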